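/- Let A be a commutative ring and n ≥ 1. Then the element det is a nonzerodivisor of the polynomial ring A[X_{ij}]: for every f ∈ A[X_{ij}], if f · det = 0 then f = 0. -/

import Mathlib

/-!
Substituting `X i j ↦ X i j + δ i j • t` turns the generic determinant into the characteristic
polynomial of `-(X i j)` in the new variable `t`, which is monic and hence a nonzerodivisor.
The substitution is injective, since setting `t = 0` undoes it, so the determinant is a
nonzerodivisor already before substituting.
-/

open Polynomial
open scoped nonZeroDivisors

namespace Matrix

variable (n R : Type*) [DecidableEq n] [CommRing R]

noncomputable def mvPolynomialXAddDiagonal :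
    MvPolynomial (n × n) R →ₐ[R] (MvPolynomial (n × n) R)[X] :=
  MvPolynomial.aeval fun p => C (MvPolynomial.X p) + if p.1 = p.2 then X else 0

variable {n R}

theorem eval_zero_mvPolynomialXAddDiagonal (f : MvPolynomial (n × n) R) :
    (mvPolynomialXAddDiagonal n R f).eval 0 = f := by
  have h : (evalRingHom 0).comp (mvPolynomialXAddDiagonal n R).toRingHom = RingHom.id _ := by
    refine MvPolynomial.ringHom_ext (fun a => ?_) (fun p => ?_)
    · simp [mvPolynomialXAddDiagonal, MvPolynomial.algebraMap_eq]
    · by_cases hp : p.1 = p.2 <;> simp [mvPolynomialXAddDiagonal, hp]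
  exact RingHom.congr_fun h f

theorem mvPolynomialXAddDiagonal_injective :
    Function.Injective (mvPolynomialXAddDiagonal n R) :=
  Function.LeftInverse.injective eval_zero_mvPolynomialXAddDiagonal

theorem mvPolynomialXAddDiagonal_det [Fintype n] :
    mvPolynomialXAddDiagonal n R (mvPolynomialX n n R).det = (-mvPolynomialX n n R).charpoly := by
  rw [AlgHom.map_det, charpoly]
  congr 1
  ext i j
  by_cases h : i = j
  · subst h
    simp [mvPolynomialXAddDiagonal, charmatrix_apply_eq, add_comm]
  · simp [mvPolynomialXAddDiagonal, h]

theorem det_mvPolynomialX_mem_nonZeroDivisors [Fintype n] :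
    (mvPolynomialX n n R).det ∈ (MvPolynomial (n × n) R)⁰ := by
  refine mem_nonZeroDivisors_of_injective mvPolynomialXAddDiagonal_injective ?_
  rw [mvPolynomialXAddDiagonal_det]
  exact (charpoly_monic _).mem_nonZeroDivisors

end Matrix

theorem det_nonZeroDivisor_mvPolynomial_general
    (A : Type) [CommRing A] (n : ℕ)
    (f : MvPolynomial (Fin n × Fin n) A)
    (hf : f * Matrix.det (Matrix.of fun i j : Fin n => MvPolynomial.X (i, j)) = 0) :
    f = 0 :=
  (mem_nonZeroDivisors_iff.mp Matrix.det_mvPolynomialX_mem_nonZeroDivisors).2 f hf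

/-- For a commutative ring `A` and `n ≥ 1`, the generic determinant
`det ∈ A[X_{ij}]` is a nonzerodivisor: if `f · det = 0` then `f = 0`. -/
theorem det_nonZeroDivisor_mvPolynomial
    (A : Type) [CommRing A] (n : ℕ) (hn : 1 ≤ n)
    (f : MvPolynomial (Fin n × Fin n) A)
    (hf : f * Matrix.det (Matrix.of fun i j : Fin n => MvPolynomial.X (i, j)) = 0) :
    f = 0 :=
  det_nonZeroDivisor_mvPolynomial_general A n f hf
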